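/- arXiv:1208.2759 — 3 statements merged into one kernel-verified Lean document; each statement's English description precedes it below -/
import Mathlib

section
/- For any slope α ∈ [0,1] and intercept ρ ∈ ℝ, the Sturmian word s_{ρ,α} defined by s_{ρ,α}(n) = 0 iff (ρ + nα) mod 1 ∈ [0, 1−α) is balanced: for any two finite factors of s_{ρ,α} of the same length, the number of occurrences of the letter 0 in them differs by at most one. -/
/-- The Sturmian word of intercept `ρ` and slope `α`: letter `0` iff `(ρ + nα) mod 1 ∈ [0, 1-α)`. -/
noncomputable def sturm (ρ α : ℝ) (n : ℤ) : Fin 2 :=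
  if Int.fract (ρ + n * α) < 1 - α then 0 else 1

/-- Number of occurrences of the letter `0` in `u(p)…u(q)`. -/
noncomputable def zeroCount (u : ℤ → Fin 2) (p q : ℤ) : ℤ :=
  (((Finset.Icc p q).filter (fun i => u i = 0)).card : ℤ)

/-- The balance distance between `u` and `v` is at most one. -/
def distLE1 (u v : ℤ → Fin 2) : Prop :=
  ∀ p q : ℤ, p ≤ q → |zeroCount u p q - zeroCount v p q| ≤ 1

/-!
Writing `⌊ρ + nα⌋` for the mechanical sequence, letter `n` is `1` exactly when that sequence
jumps between `n` and `n + 1`, since `α ∈ [0, 1]`. The number of `1`s in `s(p)…s(p+r)` therefore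
telescopes to `⌊ρ + (p + r + 1)α⌋ - ⌊ρ + pα⌋`, which always lies in `{⌊(r + 1)α⌋, ⌊(r + 1)α⌋ + 1}`
whatever `p` is.
-/

open Finset

lemma Int.floor_add_sub_floor_mem_Icc {R : Type*} [Ring R] [LinearOrder R] [IsStrictOrderedRing R]
    [FloorRing R] (x y : R) : ⌊x + y⌋ - ⌊x⌋ ∈ Set.Icc ⌊y⌋ (⌊y⌋ + 1) := by
  have := Int.le_floor_add x y
  have := Int.le_floor_add_floor x y
  constructor <;> omega

lemma Int.sum_Icc_sub {G : Type*} [AddCommGroup G] (f : ℤ → G) (p : ℤ) (r : ℕ) :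
    ∑ i ∈ Icc p (p + r), (f (i + 1) - f i) = f (p + r + 1) - f p := by
  induction r with
  | zero => simp only [Nat.cast_zero, add_zero, Icc_self, sum_singleton]
  | succ r ih =>
    rw [Nat.cast_succ, ← add_assoc, ← insert_Icc_right_eq_Icc_add_one (by omega),
      sum_insert (by simp), ih]
    abel

lemma zeroCount_eq_sum (u : ℤ → Fin 2) (p q : ℤ) :
    zeroCount u p q = ∑ i ∈ Icc p q, if u i = 0 then (1 : ℤ) else 0 := by
  rw [zeroCount]
  exact_mod_cast card_filter _ _

lemma sturm_zero_indicator {ρ α : ℝ} (hα : α ∈ Set.Icc (0 : ℝ) 1) (n : ℤ) :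
    (if sturm ρ α n = 0 then (1 : ℤ) else 0)
      = 1 - (⌊ρ + ((n + 1 : ℤ) : ℝ) * α⌋ - ⌊ρ + n * α⌋) := by
  obtain ⟨hα0, hα1⟩ := hα
  have hsplit : ⌊ρ + ((n + 1 : ℤ) : ℝ) * α⌋ = ⌊ρ + n * α⌋ + ⌊Int.fract (ρ + n * α) + α⌋ := by
    rw [← Int.floor_intCast_add, ← add_assoc, Int.floor_add_fract]
    push_cast
    ring_nf
  have := Int.fract_nonneg (ρ + n * α)
  have := Int.fract_lt_one (ρ + n * α)
  rw [hsplit, add_sub_cancel_left, sturm]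
  by_cases hlt : Int.fract (ρ + n * α) < 1 - α
  · rw [if_pos hlt, if_pos rfl, Int.floor_eq_zero_iff.mpr ⟨by linarith, by linarith⟩, sub_zero]
  · rw [if_neg hlt, if_neg (by decide), (Int.floor_eq_iff (z := 1)).mpr ⟨by push_cast; linarith,
      by push_cast; linarith⟩, sub_self]

lemma zeroCount_sturm {ρ α : ℝ} (hα : α ∈ Set.Icc (0 : ℝ) 1) (p : ℤ) (r : ℕ) :
    zeroCount (sturm ρ α) p (p + r)
      = r + 1 - (⌊ρ + ((p + r + 1 : ℤ) : ℝ) * α⌋ - ⌊ρ + p * α⌋) := by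
  rw [zeroCount_eq_sum]
  simp only [sturm_zero_indicator hα, sum_sub_distrib,
    Int.sum_Icc_sub (fun n : ℤ => ⌊ρ + n * α⌋), sum_const, Int.card_Icc, nsmul_eq_mul, mul_one]
  omega

lemma floor_add_mul_sub_floor_mem_Icc (ρ α : ℝ) (p : ℤ) (r : ℕ) :
    ⌊ρ + ((p + r + 1 : ℤ) : ℝ) * α⌋ - ⌊ρ + p * α⌋ ∈ Set.Icc ⌊(r + 1) * α⌋ (⌊(r + 1) * α⌋ + 1) := by
  convert Int.floor_add_sub_floor_mem_Icc (ρ + p * α) ((r + 1) * α) using 3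
  push_cast
  ring

/-- Sturmian words are balanced: any two factors of the same length have
numbers of occurrences of `0` differing by at most one. -/
theorem sturmian_balanced (ρ : ℝ) (α : ℝ) (hα : α ∈ Set.Icc (0:ℝ) 1) :
    ∀ (p q : ℤ) (r : ℕ),
      |zeroCount (sturm ρ α) p (p + r) - zeroCount (sturm ρ α) q (q + r)| ≤ 1 := by
  intro p q r
  rw [zeroCount_sturm hα, zeroCount_sturm hα]
  obtain ⟨hp₁, hp₂⟩ := floor_add_mul_sub_floor_mem_Icc ρ α p r
  obtain ⟨hq₁, hq₂⟩ := floor_add_mul_sub_floor_mem_Icc ρ α q r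
  rw [abs_le]
  constructor <;> omega
end

section
/- Let u, v : ℤ → {0,1} with d(u,v) ≤ 1, where d is the balance metric. Let D = {i ∈ ℤ : u(i) ≠ v(i)} be the set of positions where u and v differ. Then no two consecutive elements of D (i.e., p < q in D with no element of D strictly between them) have the same replacement type, where the replacement type at position i is the pair (u(i), v(i)). -/
/-! If two consecutive replacements had the same type, the factor of `u` and of `v` running from
the first to the second would differ only at its two ends, both times in the same direction, so
their numbers of zeros would differ by two. -/

def zeroExcess (u v : ℤ → Fin 2) (i : ℤ) : ℤ :=
  (if u i = 0 then 1 else 0) - (if v i = 0 then 1 else 0)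

theorem zeroCount_sub_zeroCount (u v : ℤ → Fin 2) (p q : ℤ) :
    zeroCount u p q - zeroCount v p q = ∑ i ∈ Finset.Icc p q, zeroExcess u v i := by
  simp only [zeroCount, zeroExcess, Finset.sum_sub_distrib, Finset.card_filter]
  push_cast
  rfl

theorem zeroExcess_eq_zero {u v : ℤ → Fin 2} {i : ℤ} (h : u i = v i) : zeroExcess u v i = 0 := by
  simp [zeroExcess, h]

theorem abs_zeroExcess_eq_one {u v : ℤ → Fin 2} {i : ℤ} (h : u i ≠ v i) :
    |zeroExcess u v i| = 1 := by
  unfold zeroExcess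
  generalize u i = a at h
  generalize v i = b at h
  fin_cases a <;> fin_cases b <;> simp_all

theorem zeroExcess_eq_of_pair_eq {u v : ℤ → Fin 2} {i j : ℤ} (h : (u i, v i) = (u j, v j)) :
    zeroExcess u v i = zeroExcess u v j := by
  obtain ⟨hu, hv⟩ := Prod.mk.inj h
  simp [zeroExcess, hu, hv]

theorem zeroCount_sub_zeroCount_of_eqOn_Ioo {u v : ℤ → Fin 2} {p q : ℤ} (hpq : p < q)
    (hbetween : ∀ i, p < i → i < q → u i = v i) :
    zeroCount u p q - zeroCount v p q = zeroExcess u v p + zeroExcess u v q := by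
  rw [zeroCount_sub_zeroCount, ← Finset.sum_pair hpq.ne]
  refine (Finset.sum_subset (fun i hi => ?_) fun i hi hi' => zeroExcess_eq_zero ?_).symm
  · rcases Finset.mem_insert.1 hi with rfl | hi
    · simp [hpq.le]
    · simp [Finset.mem_singleton.1 hi, hpq.le]
  · simp only [Finset.mem_Icc, Finset.mem_insert, Finset.mem_singleton, not_or] at hi hi'
    exact hbetween i (lt_of_le_of_ne hi.1 (Ne.symm hi'.1)) (lt_of_le_of_ne hi.2 hi'.2)

theorem consecutive_replacements_alternate_general (u v : ℤ → Fin 2) (h : distLE1 u v)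
    (p q : ℤ) (hpq : p < q) (hp : u p ≠ v p)
    (hbetween : ∀ i : ℤ, p < i → i < q → u i = v i) :
    (u p, v p) ≠ (u q, v q) := by
  intro hsame
  have hdiff : |zeroCount u p q - zeroCount v p q| = 2 := by
    rw [zeroCount_sub_zeroCount_of_eqOn_Ioo hpq hbetween, ← zeroExcess_eq_of_pair_eq hsame,
      ← two_mul, abs_mul, abs_zeroExcess_eq_one hp]
    norm_num
  have := h p q hpq.le
  omega

/-- If `d(u,v) ≤ 1`, then two consecutive positions where `u` and `v` differ carry
replacements of different types. -/
theorem consecutive_replacements_alternate (u v : ℤ → Fin 2) (h : distLE1 u v)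
    (p q : ℤ) (hpq : p < q) (hp : u p ≠ v p) (hq : u q ≠ v q)
    (hbetween : ∀ i : ℤ, p < i → i < q → u i = v i) :
    (u p, v p) ≠ (u q, v q) :=
  consecutive_replacements_alternate_general u v h p q hpq hp hbetween
end

section
/- Let u, v : ℤ → {0,1} and let D = {i ∈ ℤ : u(i) ≠ v(i)}. Suppose that for any two consecutive positions p < q in D (no element of D strictly between them), the replacement types at p and q differ (one is 0→1 and the other is 1→0). Then d(u,v) ≤ 1 in the balance metric. -/
/-! The discrepancy `[u i = 0] - [v i = 0]` vanishes off `D` and is `±1` on `D`, with the sign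
given by the replacement type; the hypothesis says that its nonzero values alternate in sign.
Along such a sequence, a partial sum followed by the next nonzero term never leaves `[-1, 1]`:
that term either cancels the previous nonzero term or is the first one after a zero partial sum. -/

open Finset

theorem Finset.sum_Icc_add_one_top {M : Type*} [AddCommMonoid M] {f : ℤ → M} {p r : ℤ}
    (h : p ≤ r + 1) : ∑ i ∈ Icc p (r + 1), f i = ∑ i ∈ Icc p r, f i + f (r + 1) := by
  rw [← insert_Icc_right_eq_Icc_add_one h, sum_insert (by simp), add_comm]

section Alternating

variable {α : Type*} [AddCommGroup α] [LinearOrder α] [IsOrderedAddMonoid α] {f : ℤ → α} {c : α}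

theorem abs_sum_Icc_le_and_abs_sum_Icc_add_next_le (hf : ∀ i, |f i| ≤ c)
    (halt : ∀ p q, p < q → f p ≠ 0 → f q ≠ 0 → (∀ i, p < i → i < q → f i = 0) → f p + f q = 0)
    (p r : ℤ) (hr : p - 1 ≤ r) :
    |∑ i ∈ Icc p r, f i| ≤ c ∧
      ∀ q, r < q → (∀ i, r < i → i < q → f i = 0) → |∑ i ∈ Icc p r, f i + f q| ≤ c := by
  induction r, hr using Int.leInduction with
  | base =>
    have hempty : Icc p (p - 1) = ∅ := Icc_eq_empty (by omega)
    simpa [hempty] using ⟨(abs_nonneg _).trans (hf p), fun q _ _ => hf q⟩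
  | succ r hr ih =>
    obtain ⟨hsum, hnext⟩ := ih
    have hsucc : |∑ i ∈ Icc p r, f i + f (r + 1)| ≤ c := hnext (r + 1) (by omega) (by omega)
    rw [sum_Icc_add_one_top (by omega)]
    refine ⟨hsucc, fun q hq hgap => ?_⟩
    by_cases h₁ : f (r + 1) = 0
    · rw [h₁, add_zero]
      refine hnext q (by omega) fun i hi hiq => ?_
      rcases eq_or_lt_of_le (show r + 1 ≤ i by omega) with rfl | hi'
      exacts [h₁, hgap i hi' hiq]
    by_cases h₂ : f q = 0
    · rwa [h₂, add_zero]
    rwa [add_assoc, halt (r + 1) q hq h₁ h₂ hgap, add_zero]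

theorem abs_sum_Icc_le_of_alternating (hf : ∀ i, |f i| ≤ c)
    (halt : ∀ p q, p < q → f p ≠ 0 → f q ≠ 0 → (∀ i, p < i → i < q → f i = 0) → f p + f q = 0)
    {p q : ℤ} (hpq : p ≤ q) : |∑ i ∈ Icc p q, f i| ≤ c :=
  (abs_sum_Icc_le_and_abs_sum_Icc_add_next_le hf halt p q (by omega)).1

end Alternating

def zeroIndicator (a : Fin 2) : ℤ := if a = 0 then 1 else 0

theorem zeroCount_eq_sum_zeroIndicator (u : ℤ → Fin 2) (p q : ℤ) :
    zeroCount u p q = ∑ i ∈ Icc p q, zeroIndicator (u i) := by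
  simp [zeroCount, zeroIndicator, sum_boole]

theorem abs_zeroIndicator_sub_le_one (a b : Fin 2) : |zeroIndicator a - zeroIndicator b| ≤ 1 := by
  revert a b; unfold zeroIndicator; decide

theorem zeroIndicator_sub_eq_zero_iff {a b : Fin 2} :
    zeroIndicator a - zeroIndicator b = 0 ↔ a = b := by
  revert a b; unfold zeroIndicator; decide

theorem zeroIndicator_sub_add_zeroIndicator_sub_eq_zero {a b a' b' : Fin 2} (h : a ≠ b)
    (h' : a' ≠ b') (hne : (a, b) ≠ (a', b')) :
    zeroIndicator a - zeroIndicator b + (zeroIndicator a' - zeroIndicator b') = 0 := by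
  revert a b a' b'; unfold zeroIndicator; decide

/-- If the replacement types at consecutive differing positions always alternate,
then `d(u,v) ≤ 1`. -/
theorem distLE1_of_alternating (u v : ℤ → Fin 2)
    (h : ∀ p q : ℤ, p < q → u p ≠ v p → u q ≠ v q →
      (∀ i : ℤ, p < i → i < q → u i = v i) → (u p, v p) ≠ (u q, v q)) :
    distLE1 u v := by
  intro p q hpq
  rw [zeroCount_eq_sum_zeroIndicator, zeroCount_eq_sum_zeroIndicator, ← sum_sub_distrib]
  refine abs_sum_Icc_le_of_alternating (fun i => abs_zeroIndicator_sub_le_one _ _)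
    (fun p q hpq hp hq hgap => ?_) hpq
  have hp' : u p ≠ v p := zeroIndicator_sub_eq_zero_iff.not.mp hp
  have hq' : u q ≠ v q := zeroIndicator_sub_eq_zero_iff.not.mp hq
  exact zeroIndicator_sub_add_zeroIndicator_sub_eq_zero hp' hq'
    (h p q hpq hp' hq' fun i hpi hiq => zeroIndicator_sub_eq_zero_iff.mp (hgap i hpi hiq))
end
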